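/- For λ > 0 and r > 0, ∫_r^∞ ∫_0^r ((r + r₁)/(r₁ + r₂))·8λ²·exp(-2λ(r₁+r₂)) dr₁ dr₂ = exp(-2λr) + 2λr·exp(-2λr) - exp(-4λr) - 4λr·exp(-4λr) - 4λ²r²·E₁(2λr) + 16λ²r²·E₁(4λr). -/

import Mathlib

open Real MeasureTheory

noncomputable def E1 (z : ℝ) : ℝ := ∫ t in Set.Ioi z, Real.exp (-t) / t

open Set Filter Topology Asymptotics

/-! Both integrations are done by the fundamental theorem of calculus, using `E₁' = -e^{-z}/z`.
In `r₁` the integrand has the primitive `-4λ e^{-2λ(r₁+r₂)} - 8λ²(r - r₂) E₁(2λ(r₁+r₂))`;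
the resulting nonnegative function of `r₂` has the primitive `outerAntideriv λ r`, which
vanishes at infinity because `E₁ z ≤ e^{-z}` for `z ≥ 1`. The integral is therefore
`-outerAntideriv λ r r`. -/

lemma integrableOn_exp_neg_div_self_Ioi {c : ℝ} (hc : 0 < c) :
    IntegrableOn (fun t => exp (-t) / t) (Ioi c) := by
  refine ((integrableOn_exp_neg_Ioi c).div_const c).mono'
    (by fun_prop : Measurable fun t : ℝ => exp (-t) / t).aestronglyMeasurable
    ((ae_restrict_mem measurableSet_Ioi).mono fun t (ht : c < t) => ?_)
  have ht0 : 0 < t := hc.trans ht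
  rw [norm_of_nonneg (by positivity)]
  exact div_le_div_of_nonneg_left (exp_pos _).le hc ht.le

lemma E1_nonneg {z : ℝ} (hz : 0 < z) : 0 ≤ E1 z :=
  setIntegral_nonneg measurableSet_Ioi fun t (ht : z < t) =>
    div_nonneg (exp_pos _).le (hz.trans ht).le

lemma E1_le_exp_neg_div {z : ℝ} (hz : 0 < z) : E1 z ≤ exp (-z) / z :=
  calc E1 z ≤ ∫ t in Ioi z, exp (-t) / z :=
        setIntegral_mono_on (integrableOn_exp_neg_div_self_Ioi hz)
          ((integrableOn_exp_neg_Ioi z).div_const z)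
          measurableSet_Ioi fun t (ht : z < t) => div_le_div_of_nonneg_left (exp_pos _).le hz ht.le
    _ = exp (-z) / z := by rw [integral_div, integral_exp_neg_Ioi]

lemma E1_sub_E1 {a b : ℝ} (ha : 0 < a) (hab : a ≤ b) :
    E1 a - E1 b = ∫ t in a..b, exp (-t) / t :=
  intervalIntegral.integral_Ioi_sub_Ioi (integrableOn_exp_neg_div_self_Ioi ha) hab

lemma hasDerivAt_E1 {z : ℝ} (hz : 0 < z) : HasDerivAt E1 (-(exp (-z) / z)) z := by
  have hc : 0 < z / 2 := half_pos hz
  have hmeas : Measurable fun t : ℝ => exp (-t) / t := by fun_prop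
  have hint : HasDerivAt (fun u => ∫ t in z / 2..u, exp (-t) / t) (exp (-z) / z) z :=
    intervalIntegral.integral_hasDerivAt_right
      ((intervalIntegrable_iff_integrableOn_Ioc_of_le (by linarith)).2
        ((integrableOn_exp_neg_div_self_Ioi hc).mono_set Ioc_subset_Ioi_self))
      hmeas.stronglyMeasurable.stronglyMeasurableAtFilter
      (by fun_prop (disch := exact hz.ne'))
  refine (hint.const_sub (E1 (z / 2))).congr_of_eventuallyEq ?_
  filter_upwards [Ioi_mem_nhds (half_lt_self hz)] with u (hu : z / 2 < u)
  rw [← E1_sub_E1 hc hu.le, sub_sub_cancel]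

lemma HasDerivAt.E1 {f : ℝ → ℝ} {f' x : ℝ} (hf : HasDerivAt f f' x) (hx : 0 < f x) :
    HasDerivAt (fun y => _root_.E1 (f y)) (-(Real.exp (-f x) / f x) * f') x :=
  (hasDerivAt_E1 hx).comp x hf

lemma isBigO_E1_exp_neg : E1 =O[atTop] fun y => exp (-y) := by
  refine IsBigO.of_bound' ?_
  filter_upwards [eventually_ge_atTop 1] with y hy
  rw [norm_of_nonneg (E1_nonneg (by linarith)), norm_of_nonneg (exp_pos _).le]
  calc E1 y ≤ exp (-y) / y := E1_le_exp_neg_div (by linarith)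
    _ ≤ exp (-y) := div_le_self (exp_pos _).le hy

lemma tendsto_quadratic_mul_exp_neg_atTop (a b d : ℝ) {c : ℝ} (hc : 0 < c) (e : ℝ) :
    Tendsto (fun x => (a * x ^ 2 + b * x + d) * exp (-(c * x + e))) atTop (𝓝 0) := by
  have h (n : ℕ) : Tendsto (fun x => x ^ n * exp (-(c * x + e))) atTop (𝓝 0) := by
    refine (zero_mul (exp (-e)) ▸
      (tendsto_rpow_mul_exp_neg_mul_atTop_nhds_zero n c hc).mul_const (exp (-e))).congr fun x => ?_
    rw [rpow_natCast, mul_assoc, ← exp_add]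
    ring_nf
  have h' := (((h 2).const_mul a).add ((h 1).const_mul b)).add ((h 0).const_mul d)
  simp only [mul_zero, add_zero] at h'
  exact h'.congr fun x => by ring

lemma tendsto_quadratic_mul_E1_atTop (a b d : ℝ) {c : ℝ} (hc : 0 < c) (e : ℝ) :
    Tendsto (fun x => (a * x ^ 2 + b * x + d) * E1 (c * x + e)) atTop (𝓝 0) :=
  ((isBigO_refl _ _).mul (isBigO_E1_exp_neg.comp_tendsto
    (tendsto_atTop_add_const_right _ e (tendsto_id.const_mul_atTop hc)))).trans_tendsto
    (tendsto_quadratic_mul_exp_neg_atTop a b d hc e)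

lemma integral_kernel_eq {lam r x : ℝ} (hlam : 0 < lam) (hr : 0 ≤ r) (hx : 0 < x) :
    ∫ r1 in (0:ℝ)..r, ((r + r1) / (r1 + x)) * (8 * lam ^ 2 * exp (-2 * lam * (r1 + x)))
      = 4 * lam * exp (-2 * lam * x) - 4 * lam * exp (-2 * lam * (r + x))
        + 8 * lam ^ 2 * (r - x) * (E1 (2 * lam * x) - E1 (2 * lam * (r + x))) := by
  have hpos {t : ℝ} (ht : t ∈ uIcc 0 r) : 0 < t + x := by
    rw [uIcc_of_le hr] at ht
    linarith [ht.1]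
  have hderiv (t : ℝ) (ht : t ∈ uIcc 0 r) : HasDerivAt
      (fun t => -4 * lam * exp (-2 * lam * (t + x))
        - 8 * lam ^ 2 * (r - x) * E1 (2 * lam * (t + x)))
      ((r + t) / (t + x) * (8 * lam ^ 2 * exp (-2 * lam * (t + x)))) t := by
    have hlin (c : ℝ) : HasDerivAt (fun t => c * (t + x)) c t := by
      simpa using ((hasDerivAt_id' t).add_const x).const_mul c
    refine (((hlin _).exp.const_mul (-4 * lam)).sub
      (((hlin _).E1 (mul_pos (by positivity) (hpos ht))).const_mul _)).congr_deriv ?_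
    have := (hpos ht).ne'
    simp only [neg_mul]
    field_simp
    ring
  have hint : IntervalIntegrable
      (fun t => (r + t) / (t + x) * (8 * lam ^ 2 * exp (-2 * lam * (t + x)))) volume 0 r :=
    ContinuousOn.intervalIntegrable (by fun_prop (disch := exact fun t ht => (hpos ht).ne'))
  rw [intervalIntegral.integral_eq_sub_of_hasDerivAt hderiv hint, zero_add]
  ring

noncomputable def outerAntideriv (lam r x : ℝ) : ℝ :=
  exp (-2 * lam * x) * (2 * lam * x - 4 * lam * r - 1)
    + exp (-2 * lam * (r + x)) * (1 + 6 * lam * r - 2 * lam * x)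
    + 4 * lam ^ 2 * x * (2 * r - x) * E1 (2 * lam * x)
    + 4 * lam ^ 2 * (x - 3 * r) * (x + r) * E1 (2 * lam * (r + x))

lemma hasDerivAt_outerAntideriv {lam r x : ℝ} (hlam : 0 < lam) (hr : 0 ≤ r) (hx : 0 < x) :
    HasDerivAt (outerAntideriv lam r)
      (4 * lam * exp (-2 * lam * x) - 4 * lam * exp (-2 * lam * (r + x))
        + 8 * lam ^ 2 * (r - x) * (E1 (2 * lam * x) - E1 (2 * lam * (r + x)))) x := by
  have hlin₁ (c : ℝ) : HasDerivAt (fun y => c * y) c x := by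
    simpa using (hasDerivAt_id' x).const_mul c
  have hlin₂ (c : ℝ) : HasDerivAt (fun y => c * (r + y)) c x := by
    simpa using ((hasDerivAt_id' x).const_add r).const_mul c
  have h := ((((hlin₁ (-2 * lam)).exp.mul
      (((hlin₁ (2 * lam)).sub_const (4 * lam * r)).sub_const 1)).add
    ((hlin₂ (-2 * lam)).exp.mul ((hlin₁ (2 * lam)).const_sub (1 + 6 * lam * r)))).add
    ((((hlin₁ (4 * lam ^ 2)).mul ((hasDerivAt_id' x).const_sub (2 * r))).mul
      ((hlin₁ (2 * lam)).E1 (by positivity))))).add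
    ((((((hasDerivAt_id' x).sub_const (3 * r))).const_mul (4 * lam ^ 2)).mul
      ((hasDerivAt_id' x).add_const r)).mul ((hlin₂ (2 * lam)).E1 (by positivity)))
  refine h.congr_deriv ?_
  simp only [Pi.mul_apply, neg_mul]
  field_simp
  ring

lemma tendsto_outerAntideriv_atTop {lam : ℝ} (hlam : 0 < lam) (r : ℝ) :
    Tendsto (outerAntideriv lam r) atTop (𝓝 0) := by
  have hc : 0 < 2 * lam := by positivity
  have h := (((tendsto_quadratic_mul_exp_neg_atTop 0 (2 * lam) (-4 * lam * r - 1) hc 0).add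
    (tendsto_quadratic_mul_exp_neg_atTop 0 (-2 * lam) (1 + 6 * lam * r) hc (2 * lam * r))).add
    (tendsto_quadratic_mul_E1_atTop (-4 * lam ^ 2) (8 * lam ^ 2 * r) 0 hc 0)).add
    (tendsto_quadratic_mul_E1_atTop (4 * lam ^ 2) (-8 * lam ^ 2 * r) (-12 * lam ^ 2 * r ^ 2) hc
      (2 * lam * r))
  simp only [add_zero] at h
  refine h.congr fun x => ?_
  unfold outerAntideriv
  ring_nf

theorem stmt8 (lam r : ℝ) (hlam : 0 < lam) (hr : 0 < r) :
    (∫ r2 in Set.Ioi r, ∫ r1 in (0:ℝ)..r,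
        ((r + r1) / (r1 + r2)) * (8 * lam ^ 2 * Real.exp (-2 * lam * (r1 + r2))))
      = Real.exp (-2 * lam * r) + 2 * lam * r * Real.exp (-2 * lam * r)
        - Real.exp (-4 * lam * r) - 4 * lam * r * Real.exp (-4 * lam * r)
        - 4 * lam ^ 2 * r ^ 2 * E1 (2 * lam * r)
        + 16 * lam ^ 2 * r ^ 2 * E1 (4 * lam * r) := by
  have hderiv (x : ℝ) (hx : x ∈ Ici r) : HasDerivAt (outerAntideriv lam r)
      (∫ r1 in (0:ℝ)..r, ((r + r1) / (r1 + x)) * (8 * lam ^ 2 * exp (-2 * lam * (r1 + x))))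
      x := by
    have hx0 : 0 < x := hr.trans_le hx
    rw [integral_kernel_eq hlam hr.le hx0]
    exact hasDerivAt_outerAntideriv hlam hr.le hx0
  have hnonneg (x : ℝ) (hx : x ∈ Ioi r) :
      0 ≤ ∫ r1 in (0:ℝ)..r,
        ((r + r1) / (r1 + x)) * (8 * lam ^ 2 * exp (-2 * lam * (r1 + x))) :=
    intervalIntegral.integral_nonneg hr.le fun t ht => by
      have : 0 < t + x := by linarith [ht.1, hr.trans (mem_Ioi.1 hx)]
      have : 0 ≤ r + t := by linarith [ht.1]
      positivity
  rw [integral_Ioi_of_hasDerivAt_of_nonneg' hderiv hnonneg (tendsto_outerAntideriv_atTop hlam r),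
    outerAntideriv, show 2 * lam * (r + r) = 4 * lam * r by ring,
    show -2 * lam * (r + r) = -4 * lam * r by ring]
  ring
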